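/- arXiv:2208.03687 — 4 statements merged into one kernel-verified Lean document; each statement's English description precedes it below -/
import Mathlib

section
/- Let X and Y be real normed vector spaces and let f : X → Y be Hadamard semidifferentiable at x ∈ X with semiderivative function d(v) = d_H f(x)[v]. Then d is sequentially continuous: for every sequence (vₙ) in X with vₙ → v one has d(vₙ) → d(v) in Y. -/
/-!
Testing Hadamard semidifferentiability at `x` in the direction `v` on all admissible
semitrajectories shows that the difference quotient `t⁻¹ • (f (x + t • w) - f x)` tends to
`d v` jointly as `t → 0⁺` and `w → v`: along a sequence `(tₙ, wₙ)` one may pass to a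
subsequence on which `tₙ` is injective, and then the semitrajectory equal to `x + tₙ • wₙ` at
`tₙ` and to `x + t • v` elsewhere is admissible. For each fixed `w` the same quotient tends to
`d w` as `t → 0⁺`, so interchanging the two limits makes `d` continuous at `v`.
-/

open Filter Topology

/-- `f` is Hadamard semidifferentiable at `x` in the direction `v` with semiderivative `w`. -/
def HadamardSemidiffAt {X Y : Type*} [NormedAddCommGroup X] [NormedSpace ℝ X]
    [NormedAddCommGroup Y] [NormedSpace ℝ Y] (f : X → Y) (x v : X) (w : Y) : Prop :=
  ∀ h : ℝ → X, h 0 = x →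
    Tendsto (fun t => t⁻¹ • (h t - x)) (𝓝[>] (0 : ℝ)) (𝓝 v) →
    Tendsto (fun t => t⁻¹ • (f (h t) - f x)) (𝓝[>] (0 : ℝ)) (𝓝 w)

open Function

theorem tendsto_extend_nhdsNE {α β : Type*} [TopologicalSpace α] [T1Space α]
    [TopologicalSpace β] {t : ℕ → α} (ht : Injective t) {w : ℕ → β} {v : β}
    (hw : Tendsto w atTop (𝓝 v)) (a : α) :
    Tendsto (extend t w fun _ => v) (𝓝[≠] a) (𝓝 v) := by
  intro U hU
  have hfin : {n | w n ∉ U}.Finite := by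
    simpa [← Nat.cofinite_eq_atTop] using hw.eventually_mem hU
  refine mem_map.2 <|
    mem_of_superset (nhdsNE_le_cofinite a (hfin.image t).compl_mem_cofinite) fun τ hτ => ?_
  by_cases hrange : ∃ n, t n = τ
  · obtain ⟨n, rfl⟩ := hrange
    rw [Set.mem_preimage, ht.extend_apply]
    by_contra hn
    exact hτ ⟨n, hn, rfl⟩
  · rw [Set.mem_preimage, extend_apply' _ _ _ hrange]
    exact mem_of_mem_nhds hU

theorem exists_strictMono_injective_comp_of_tendsto_nhdsGT {𝕜 : Type*} [Semifield 𝕜]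
    [LinearOrder 𝕜] [IsStrictOrderedRing 𝕜] [TopologicalSpace 𝕜] [OrderTopology 𝕜] {t : ℕ → 𝕜}
    (ht : Tendsto t atTop (𝓝[>] 0)) : ∃ φ : ℕ → ℕ, StrictMono φ ∧ Injective (t ∘ φ) := by
  obtain ⟨φ, hφ, hinv⟩ := strictMono_subseq_of_tendsto_atTop (tendsto_inv_nhdsGT_zero.comp ht)
  exact ⟨φ, hφ, Injective.of_comp (f := Inv.inv) hinv.injective⟩

theorem tendsto_of_tendsto_uncurry {α β γ : Type*} [TopologicalSpace γ] [RegularSpace γ]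
    {G : α → β → γ} {g : β → γ} {la : Filter α} [la.NeBot] {lb : Filter β} {c : γ}
    (hG : Tendsto (uncurry G) (la ×ˢ lb) (𝓝 c)) (hg : ∀ b, Tendsto (G · b) la (𝓝 (g b))) :
    Tendsto g lb (𝓝 c) := by
  refine (closed_nhds_basis c).tendsto_right_iff.2 fun U ⟨hU, hUc⟩ => ?_
  obtain ⟨A, hA, B, hB, hAB⟩ := eventually_prod_iff.1 (hG.eventually_mem hU)
  filter_upwards [hB] with b hb
  exact hUc.mem_of_tendsto (hg b) (hA.mono fun a ha => hAB ha hb)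

section

variable {X Y : Type*} [NormedAddCommGroup X] [NormedSpace ℝ X]
  [NormedAddCommGroup Y] [NormedSpace ℝ Y]

noncomputable def dirDiffQuot (f : X → Y) (x : X) (t : ℝ) (w : X) : Y :=
  t⁻¹ • (f (x + t • w) - f x)

namespace HadamardSemidiffAt

variable {f : X → Y} {x v : X} {d : Y}

theorem tendsto_dirDiffQuot_comp (hf : HadamardSemidiffAt f x v d) {η : ℝ → X}
    (hη : Tendsto η (𝓝[>] 0) (𝓝 v)) :
    Tendsto (fun t => dirDiffQuot f x t (η t)) (𝓝[>] 0) (𝓝 d) := by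
  refine hf (fun t => x + t • η t) (by simp) (hη.congr' ?_)
  filter_upwards [self_mem_nhdsWithin] with t (ht : 0 < t)
  simp [smul_smul, inv_mul_cancel₀ ht.ne']

theorem tendsto_dirDiffQuot (hf : HadamardSemidiffAt f x v d) :
    Tendsto (fun t => dirDiffQuot f x t v) (𝓝[>] 0) (𝓝 d) :=
  hf.tendsto_dirDiffQuot_comp tendsto_const_nhds

theorem tendsto_dirDiffQuot_seq (hf : HadamardSemidiffAt f x v d) {t : ℕ → ℝ}
    (ht : Injective t) (ht0 : Tendsto t atTop (𝓝[>] 0)) {w : ℕ → X}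
    (hw : Tendsto w atTop (𝓝 v)) :
    Tendsto (fun n => dirDiffQuot f x (t n) (w n)) atTop (𝓝 d) := by
  have hη := (tendsto_extend_nhdsNE ht hw 0).mono_left (nhdsGT_le_nhdsNE 0)
  simpa [comp_def, ht.extend_apply] using (hf.tendsto_dirDiffQuot_comp hη).comp ht0

theorem tendsto_uncurry_dirDiffQuot (hf : HadamardSemidiffAt f x v d) :
    Tendsto (uncurry (dirDiffQuot f x)) (𝓝[>] 0 ×ˢ 𝓝 v) (𝓝 d) := by
  refine tendsto_of_subseq_tendsto fun p hp => ?_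
  rw [tendsto_prod_iff'] at hp
  obtain ⟨φ, hφ, hinj⟩ := exists_strictMono_injective_comp_of_tendsto_nhdsGT hp.1
  exact ⟨φ, hf.tendsto_dirDiffQuot_seq hinj (hp.1.comp hφ.tendsto_atTop)
    (hp.2.comp hφ.tendsto_atTop)⟩

end HadamardSemidiffAt

theorem continuous_of_hadamardSemidiffAt {f : X → Y} {x : X} {d : X → Y}
    (hf : ∀ v, HadamardSemidiffAt f x v (d v)) : Continuous d :=
  continuous_iff_continuousAt.2 fun v =>
    tendsto_of_tendsto_uncurry (hf v).tendsto_uncurry_dirDiffQuot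
      fun w => (hf w).tendsto_dirDiffQuot

end

/-- The Hadamard semiderivative `v ↦ d_H f(x)[v]` of a Hadamard semidifferentiable function
is sequentially continuous. -/
theorem hadamard_semideriv_sequentiallyContinuous
    {X Y : Type*} [NormedAddCommGroup X] [NormedSpace ℝ X]
    [NormedAddCommGroup Y] [NormedSpace ℝ Y]
    (f : X → Y) (x : X) (d : X → Y)
    (hdiff : ∀ v : X, HadamardSemidiffAt f x v (d v)) :
    ∀ (u : ℕ → X) (v : X), Tendsto u atTop (𝓝 v) →
      Tendsto (fun n => d (u n)) atTop (𝓝 (d v)) :=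
  fun _ _ huv => ((continuous_of_hadamardSemidiffAt hdiff).tendsto _).comp huv
end

section
/- (Chain rule for Hadamard semiderivatives.) Let X, Y, Z be real normed vector spaces, let x, v ∈ X, let g : X → Y be Hadamard semidifferentiable at x in the direction v with semiderivative w ∈ Y, and let f : Y → Z be Hadamard semidifferentiable at g(x) in the direction w with semiderivative z ∈ Z. Then f ∘ g is Hadamard semidifferentiable at x in the direction v with semiderivative z. -/
open Filter Topology

/-- Chain rule for Hadamard semiderivatives:
`d_H(f ∘ g)(x)[v] = d_H f(g(x))[d_H g(x)[v]]`. -/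
theorem hadamard_semideriv_chain_rule
    {X Y Z : Type*} [NormedAddCommGroup X] [NormedSpace ℝ X]
    [NormedAddCommGroup Y] [NormedSpace ℝ Y]
    [NormedAddCommGroup Z] [NormedSpace ℝ Z]
    (g : X → Y) (f : Y → Z) (x v : X) (w : Y) (z : Z)
    (hg : HadamardSemidiffAt g x v w)
    (hf : HadamardSemidiffAt f (g x) w z) :
    HadamardSemidiffAt (f ∘ g) x v z :=
  fun h h0 hv => hf (g ∘ h) (congrArg g h0) (hg h h0 hv)
end

section
/- (Material semiderivative of a gradient inner product.) Fix n ∈ ℕ, a vector field V : ℝⁿ → ℝⁿ, and set F_t(x) = x + t·V(x). Let (g_t)_{t≥0} and (q_t)_{t≥0} be families of functions ℝⁿ → ℝ, differentiable at F_t(x) for all small t ≥ 0, and let x ∈ ℝⁿ. Suppose the Hadamard material semiderivatives D_{Hm}g(y), D_{Hm}q(y) exist near x and are partially differentiable at x, and suppose that for each i ∈ {1, …, n} the limits lim_{t→0⁺} (∂_i g_t(F_t(x)) − ∂_i g_0(x))/t and lim_{t→0⁺} (∂_i q_t(F_t(x)) − ∂_i q_0(x))/t exist and equal ∂_i(D_{Hm}g)(x)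 − Σ_{l=1}^n ∂_l g_0(x)·∂_i V_l(x) and ∂_i(D_{Hm}q)(x) − Σ_{l=1}^n ∂_l q_0(x)·∂_i V_l(x), respectively. Then the family t ↦ Σ_{i=1}^n ∂_i g_t · ∂_i q_t has a Hadamard material semiderivative at x given by lim_{t→0⁺} (Σ_i ∂_i g_t(F_t(x))·∂_i q_t(F_t(x)) − Σ_i ∂_i g_0(x)·∂_i q_0(x))/t = Σ_i ∂_i g_0(x)·∂_i(D_{Hm}q)(x) + Σ_i ∂_i q_0(x)·∂_i(D_{Hm}g)(x) − Σ_{i,l} (∂_l g_0(x)·∂_i q_0(x) + ∂_i g_0(x)·∂_l q_0(x))·∂_i V_l(x), i.e. D_{Hm}(∇g·∇q)(x) = ∇g(x)ᵀ∇(D_{Hm}q)(x) − ∇g(x)ᵀ(DV(x) + DV(x)ᵀ)∇q(x) + ∇q(x)ᵀ∇(D_{Hm}g)(x). -/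
/-!
A material semiderivative at `x` is a right derivative at `t = 0` of `t ↦ f_t(F_t x)`. So the
claim is the Leibniz rule for `t ↦ ∑ᵢ ∂ᵢg_t(F_t x) · ∂ᵢq_t(F_t x)`, applied to the given right
derivatives of the factors, followed by regrouping the transport terms `∂ᵢVₗ(x)`.
-/

open Filter Topology

/-- The `i`-th partial derivative of `f : ℝⁿ → ℝ` at `x`. -/
noncomputable def pderiv' (n : ℕ) (i : Fin n) (f : (Fin n → ℝ) → ℝ) (x : Fin n → ℝ) : ℝ :=
  fderiv ℝ f x (Pi.single i 1)

open Set

theorem hasDerivWithinAt_Ioi_iff_tendsto_sub_div {f : ℝ → ℝ} {f' : ℝ} :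
    HasDerivWithinAt f f' (Ioi 0) 0 ↔ Tendsto (fun t => (f t - f 0) / t) (𝓝[>] 0) (𝓝 f') := by
  rw [hasDerivWithinAt_iff_tendsto_slope' (s := Ioi 0) (lt_irrefl 0)]
  exact tendsto_congr fun t => by rw [slope_def_field, sub_zero]

theorem sum_leibniz_transport_eq {ι R : Type*} [Fintype ι] [CommRing R]
    (a b A B : ι → R) (C : ι → ι → R) :
    ∑ i, ((A i - ∑ l, a l * C i l) * b i + a i * (B i - ∑ l, b l * C i l))
      = ∑ i, a i * B i + ∑ i, b i * A i - ∑ i, ∑ l, (a l * b i + a i * b l) * C i l := by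
  have transport (i : ι) : ∑ l, (a l * b i + a i * b l) * C i l
      = (∑ l, a l * C i l) * b i + a i * ∑ l, b l * C i l := by
    simp only [Finset.sum_mul, Finset.mul_sum, ← Finset.sum_add_distrib]
    exact Finset.sum_congr rfl fun l _ => by ring
  simp only [transport, ← Finset.sum_add_distrib, ← Finset.sum_sub_distrib]
  exact Finset.sum_congr rfl fun i _ => by ring

theorem hadamard_material_semideriv_gradient_product_general
    (n : ℕ) (V : (Fin n → ℝ) → (Fin n → ℝ)) (x : Fin n → ℝ)
    (g q : ℝ → (Fin n → ℝ) → ℝ)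
    (pDmg pDmq : Fin n → ℝ)
    -- the material semiderivatives of the partial derivatives exist and are given by
    -- `∂ᵢ(D_{Hm}g)(x) − Σₗ ∂ₗg₀(x)·∂ᵢVₗ(x)` (and likewise for `q`)
    (hcg : ∀ i : Fin n,
      Tendsto (fun t => (pderiv' n i (g t) (x + t • V x) - pderiv' n i (g 0) x) / t)
        (𝓝[>] (0 : ℝ))
        (𝓝 (pDmg i - ∑ l, pderiv' n l (g 0) x * pderiv' n i (fun y => V y l) x)))
    (hcq : ∀ i : Fin n,
      Tendsto (fun t => (pderiv' n i (q t) (x + t • V x) - pderiv' n i (q 0) x) / t)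
        (𝓝[>] (0 : ℝ))
        (𝓝 (pDmq i - ∑ l, pderiv' n l (q 0) x * pderiv' n i (fun y => V y l) x))) :
    Tendsto
      (fun t => ((∑ i, pderiv' n i (g t) (x + t • V x) * pderiv' n i (q t) (x + t • V x))
        - ∑ i, pderiv' n i (g 0) x * pderiv' n i (q 0) x) / t)
      (𝓝[>] (0 : ℝ))
      (𝓝 ((∑ i, pderiv' n i (g 0) x * pDmq i) + (∑ i, pderiv' n i (q 0) x * pDmg i)
        - ∑ i, ∑ l, (pderiv' n l (g 0) x * pderiv' n i (q 0) x
            + pderiv' n i (g 0) x * pderiv' n l (q 0) x) * pderiv' n i (fun y => V y l) x)) := by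
  have at_zero (f : ℝ → (Fin n → ℝ) → ℝ) (i : Fin n) :
      (fun t => pderiv' n i (f t) (x + t • V x)) 0 = pderiv' n i (f 0) x := by
    simp only [zero_smul, add_zero]
  have hg (i : Fin n) := hasDerivWithinAt_Ioi_iff_tendsto_sub_div.mpr (at_zero g i ▸ hcg i)
  have hq (i : Fin n) := hasDerivWithinAt_Ioi_iff_tendsto_sub_div.mpr (at_zero q i ▸ hcq i)
  have leibniz := hasDerivWithinAt_Ioi_iff_tendsto_sub_div.mp
    (HasDerivWithinAt.fun_sum (u := Finset.univ) fun i _ => (hg i).fun_mul (hq i))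
  simp only [zero_smul, add_zero] at leibniz
  rwa [sum_leibniz_transport_eq _ _ pDmg pDmq] at leibniz

/-- Material semiderivative of a gradient inner product:
`D_{Hm}(∇g·∇q)(x) = ∇g(x)ᵀ∇(D_{Hm}q)(x) − ∇g(x)ᵀ(DV(x)+DV(x)ᵀ)∇q(x) + ∇q(x)ᵀ∇(D_{Hm}g)(x)`. -/
theorem hadamard_material_semideriv_gradient_product
    (n : ℕ) (V : (Fin n → ℝ) → (Fin n → ℝ)) (x : Fin n → ℝ)
    (g q : ℝ → (Fin n → ℝ) → ℝ) (τ : ℝ) (hτ : 0 < τ)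
    (hgdiff : ∀ t ∈ Set.Ico (0 : ℝ) τ, DifferentiableAt ℝ (g t) (x + t • V x))
    (hqdiff : ∀ t ∈ Set.Ico (0 : ℝ) τ, DifferentiableAt ℝ (q t) (x + t • V x))
    (Dmg Dmq : (Fin n → ℝ) → ℝ)
    -- the material semiderivatives exist near `x`
    (hg : ∀ᶠ y in 𝓝 x,
      Tendsto (fun t => (g t (y + t • V y) - g 0 y) / t) (𝓝[>] (0 : ℝ)) (𝓝 (Dmg y)))
    (hq : ∀ᶠ y in 𝓝 x,
      Tendsto (fun t => (q t (y + t • V y) - q 0 y) / t) (𝓝[>] (0 : ℝ)) (𝓝 (Dmq y)))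
    -- `D_{Hm}g` and `D_{Hm}q` are partially differentiable at `x`
    (pDmg pDmq : Fin n → ℝ)
    (hpg : ∀ i : Fin n, HasLineDerivAt ℝ Dmg (pDmg i) x (Pi.single i 1))
    (hpq : ∀ i : Fin n, HasLineDerivAt ℝ Dmq (pDmq i) x (Pi.single i 1))
    -- the material semiderivatives of the partial derivatives exist and are given by
    -- `∂ᵢ(D_{Hm}g)(x) − Σₗ ∂ₗg₀(x)·∂ᵢVₗ(x)` (and likewise for `q`)
    (hcg : ∀ i : Fin n,
      Tendsto (fun t => (pderiv' n i (g t) (x + t • V x) - pderiv' n i (g 0) x) / t)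
        (𝓝[>] (0 : ℝ))
        (𝓝 (pDmg i - ∑ l, pderiv' n l (g 0) x * pderiv' n i (fun y => V y l) x)))
    (hcq : ∀ i : Fin n,
      Tendsto (fun t => (pderiv' n i (q t) (x + t • V x) - pderiv' n i (q 0) x) / t)
        (𝓝[>] (0 : ℝ))
        (𝓝 (pDmq i - ∑ l, pderiv' n l (q 0) x * pderiv' n i (fun y => V y l) x))) :
    Tendsto
      (fun t => ((∑ i, pderiv' n i (g t) (x + t • V x) * pderiv' n i (q t) (x + t • V x))
        - ∑ i, pderiv' n i (g 0) x * pderiv' n i (q 0) x) / t)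
      (𝓝[>] (0 : ℝ))
      (𝓝 ((∑ i, pderiv' n i (g 0) x * pDmq i) + (∑ i, pderiv' n i (q 0) x * pDmg i)
        - ∑ i, ∑ l, (pderiv' n l (g 0) x * pderiv' n i (q 0) x
            + pderiv' n i (g 0) x * pderiv' n l (q 0) x) * pderiv' n i (fun y => V y l) x)) :=
  hadamard_material_semideriv_gradient_product_general n V x g q pDmg pDmq hcg hcq
end

section
/- (Material semiderivative of a bilinear-form integrand.) Fix n ∈ ℕ, a vector field V : ℝⁿ → ℝⁿ, and set F_t(x) = x + t·V(x). Let a_{ij}, d_i, b : ℝⁿ → ℝ (1 ≤ i, j ≤ n) be coefficient functions, (g_t)_{t≥0}, (q_t)_{t≥0} families of functions ℝⁿ → ℝ differentiable at F_t(x) for small t ≥ 0, and x ∈ ℝⁿ. Assume: (a) each coefficient c ∈ {a_{ij}, d_i, b} satisfies lim_{t→0⁺} (c(F_t(x)) − c(x))/t = 0; (b) the Hadamard material semiderivatives D_{Hm}g(x) and D_{Hm}q(x) exist, D_{Hm}g and D_{Hm}q are defined near x and partially differentiable at x; (c) for each i, the limits lim_{t→0⁺} (∂_i g_t(F_t(x))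 − ∂_i g_0(x))/t and lim_{t→0⁺} (∂_i q_t(F_t(x)) − ∂_i q_0(x))/t exist and equal ∂_i(D_{Hm}g)(x) − Σ_l ∂_l g_0(x)·∂_i V_l(x) and ∂_i(D_{Hm}q)(x) − Σ_l ∂_l q_0(x)·∂_i V_l(x), respectively. Define the integrand family χ_t(y) = Σ_{i,j} a_{ij}(y)·∂_i g_t(y)·∂_j q_t(y) + Σ_i d_i(y)·(∂_i g_t(y)·q_t(y) + g_t(y)·∂_i q_t(y)) + b(y)·g_t(y)·q_t(y). Then the Hadamard material semiderivative of (χ_t) at x exists and equals Σ_{i,j} a_{ij}(x)·[(∂_i(D_{Hm}g)(x) − Σ_l ∂_l g_0(x)·∂_i V_l(x))·∂_j q_0(x) + ∂_i g_0(x)·(∂_j(D_{Hm}q)(x) − Σ_l ∂_l q_0(x)·∂_j V_l(x))] + Σ_i d_i(x)·[(∂_i(D_{Hm}g)(x) − Σ_l ∂_l g_0(x)·∂_i V_l(x))·q_0(x) + ∂_i g_0(x)·D_{Hm}q(x) + D_{Hm}g(x)·∂_i q_0(x) + g_0(x)·(∂_i(D_{Hm}q)(x) − Σ_l ∂_l q_0(x)·∂_i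 V_l(x))] + b(x)·(D_{Hm}g(x)·q_0(x) + g_0(x)·D_{Hm}q(x)). -/
open Filter Topology

/-!
Along the curve `t ↦ x + t • V x`, hypotheses (a)–(c) say precisely that every factor of the
integrand (coefficients, `g_t`, `q_t` and their partial derivatives) has a right derivative at
`t = 0`, with the coefficients' derivatives vanishing. The integrand is a finite sum of products of
these factors, so its material semiderivative follows from the product and sum rules for
one-sided derivatives.
-/

theorem hasDerivWithinAt_Ioi_zero_iff_tendsto_div {f : ℝ → ℝ} {f₀ f' : ℝ} (hf : f 0 = f₀) :
    HasDerivWithinAt f f' (Set.Ioi 0) 0 ↔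
      Tendsto (fun t => (f t - f₀) / t) (𝓝[>] 0) (𝓝 f') := by
  subst hf
  rw [hasDerivWithinAt_iff_tendsto_slope' Set.self_notMem_Ioi, slope_fun_def_field]
  simp only [sub_zero]

theorem hadamard_material_semideriv_bilinear_integrand_general
    (n : ℕ) (V : (Fin n → ℝ) → (Fin n → ℝ)) (x : Fin n → ℝ)
    (a : Fin n → Fin n → (Fin n → ℝ) → ℝ) (d : Fin n → (Fin n → ℝ) → ℝ)
    (b : (Fin n → ℝ) → ℝ)
    (g q : ℝ → (Fin n → ℝ) → ℝ)
    -- (a) the coefficient functions have vanishing material semiderivative at `x`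
    (haa : ∀ i j : Fin n,
      Tendsto (fun t => (a i j (x + t • V x) - a i j x) / t) (𝓝[>] (0 : ℝ)) (𝓝 0))
    (had : ∀ i : Fin n,
      Tendsto (fun t => (d i (x + t • V x) - d i x) / t) (𝓝[>] (0 : ℝ)) (𝓝 0))
    (hab : Tendsto (fun t => (b (x + t • V x) - b x) / t) (𝓝[>] (0 : ℝ)) (𝓝 0))
    -- (b) the material semiderivatives of `g` and `q` exist near `x` and are
    -- partially differentiable at `x`
    (Dmg Dmq : (Fin n → ℝ) → ℝ)
    (hg : ∀ᶠ y in 𝓝 x,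
      Tendsto (fun t => (g t (y + t • V y) - g 0 y) / t) (𝓝[>] (0 : ℝ)) (𝓝 (Dmg y)))
    (hq : ∀ᶠ y in 𝓝 x,
      Tendsto (fun t => (q t (y + t • V y) - q 0 y) / t) (𝓝[>] (0 : ℝ)) (𝓝 (Dmq y)))
    (pDmg pDmq : Fin n → ℝ)
    -- (c) the material semiderivatives of the partial derivatives exist and are given by
    -- `∂ᵢ(D_{Hm}g)(x) − Σₗ ∂ₗg₀(x)·∂ᵢVₗ(x)` (and likewise for `q`)
    (hcg : ∀ i : Fin n,
      Tendsto (fun t => (pderiv' n i (g t) (x + t • V x) - pderiv' n i (g 0) x) / t)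
        (𝓝[>] (0 : ℝ))
        (𝓝 (pDmg i - ∑ l, pderiv' n l (g 0) x * pderiv' n i (fun y => V y l) x)))
    (hcq : ∀ i : Fin n,
      Tendsto (fun t => (pderiv' n i (q t) (x + t • V x) - pderiv' n i (q 0) x) / t)
        (𝓝[>] (0 : ℝ))
        (𝓝 (pDmq i - ∑ l, pderiv' n l (q 0) x * pderiv' n i (fun y => V y l) x))) :
    Tendsto
      (fun t =>
        (((∑ i, ∑ j, a i j (x + t • V x)
              * pderiv' n i (g t) (x + t • V x) * pderiv' n j (q t) (x + t • V x))
          + (∑ i, d i (x + t • V x)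
              * (pderiv' n i (g t) (x + t • V x) * q t (x + t • V x)
                + g t (x + t • V x) * pderiv' n i (q t) (x + t • V x)))
          + b (x + t • V x) * g t (x + t • V x) * q t (x + t • V x))
        - ((∑ i, ∑ j, a i j x * pderiv' n i (g 0) x * pderiv' n j (q 0) x)
          + (∑ i, d i x * (pderiv' n i (g 0) x * q 0 x + g 0 x * pderiv' n i (q 0) x))
          + b x * g 0 x * q 0 x)) / t)
      (𝓝[>] (0 : ℝ))
      (𝓝 ((∑ i, ∑ j, a i j x
            * ((pDmg i - ∑ l, pderiv' n l (g 0) x * pderiv' n i (fun y => V y l) x)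
                * pderiv' n j (q 0) x
              + pderiv' n i (g 0) x
                * (pDmq j - ∑ l, pderiv' n l (q 0) x * pderiv' n j (fun y => V y l) x)))
        + (∑ i, d i x
            * ((pDmg i - ∑ l, pderiv' n l (g 0) x * pderiv' n i (fun y => V y l) x) * q 0 x
              + pderiv' n i (g 0) x * Dmq x
              + Dmg x * pderiv' n i (q 0) x
              + g 0 x * (pDmq i - ∑ l, pderiv' n l (q 0) x * pderiv' n i (fun y => V y l) x)))
        + b x * (Dmg x * q 0 x + g 0 x * Dmq x))) := by
  have hF : ∀ c : (Fin n → ℝ) → ℝ, c (x + (0 : ℝ) • V x) = c x := by simp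
  have ha i j := (hasDerivWithinAt_Ioi_zero_iff_tendsto_div (hF (a i j))).mpr (haa i j)
  have hd i := (hasDerivWithinAt_Ioi_zero_iff_tendsto_div (hF (d i))).mpr (had i)
  have hb := (hasDerivWithinAt_Ioi_zero_iff_tendsto_div (hF b)).mpr hab
  have hg0 := (hasDerivWithinAt_Ioi_zero_iff_tendsto_div (hF (g 0))).mpr hg.self_of_nhds
  have hq0 := (hasDerivWithinAt_Ioi_zero_iff_tendsto_div (hF (q 0))).mpr hq.self_of_nhds
  have hgi i := (hasDerivWithinAt_Ioi_zero_iff_tendsto_div (hF (pderiv' n i (g 0)))).mpr (hcg i)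
  have hqi i := (hasDerivWithinAt_Ioi_zero_iff_tendsto_div (hF (pderiv' n i (q 0)))).mpr (hcq i)
  refine (hasDerivWithinAt_Ioi_zero_iff_tendsto_div (by simp)).mp
    (HasDerivWithinAt.congr_deriv (.fun_add (.fun_add
      (.fun_sum fun i _ => .fun_sum fun j _ => ((ha i j).fun_mul (hgi i)).fun_mul (hqi j))
      (.fun_sum fun i _ => (hd i).fun_mul (((hgi i).fun_mul hq0).fun_add (hg0.fun_mul (hqi i)))))
      ((hb.fun_mul hg0).fun_mul hq0)) ?_)
  simp only [hF, zero_mul, zero_add]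
  congr 1
  · congr 1
    · exact Finset.sum_congr rfl fun i _ => Finset.sum_congr rfl fun j _ => by ring
    · exact Finset.sum_congr rfl fun i _ => by ring
  · ring

/-- Material semiderivative of a bilinear-form integrand
`χ_t = Σ_{i,j} a_{ij} ∂ᵢg_t ∂ⱼq_t + Σᵢ dᵢ (∂ᵢg_t q_t + g_t ∂ᵢq_t) + b g_t q_t`. -/
theorem hadamard_material_semideriv_bilinear_integrand
    (n : ℕ) (V : (Fin n → ℝ) → (Fin n → ℝ)) (x : Fin n → ℝ)
    (a : Fin n → Fin n → (Fin n → ℝ) → ℝ) (d : Fin n → (Fin n → ℝ) → ℝ)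
    (b : (Fin n → ℝ) → ℝ)
    (g q : ℝ → (Fin n → ℝ) → ℝ) (τ : ℝ) (hτ : 0 < τ)
    (hgdiff : ∀ t ∈ Set.Ico (0 : ℝ) τ, DifferentiableAt ℝ (g t) (x + t • V x))
    (hqdiff : ∀ t ∈ Set.Ico (0 : ℝ) τ, DifferentiableAt ℝ (q t) (x + t • V x))
    -- (a) the coefficient functions have vanishing material semiderivative at `x`
    (haa : ∀ i j : Fin n,
      Tendsto (fun t => (a i j (x + t • V x) - a i j x) / t) (𝓝[>] (0 : ℝ)) (𝓝 0))
    (had : ∀ i : Fin n,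
      Tendsto (fun t => (d i (x + t • V x) - d i x) / t) (𝓝[>] (0 : ℝ)) (𝓝 0))
    (hab : Tendsto (fun t => (b (x + t • V x) - b x) / t) (𝓝[>] (0 : ℝ)) (𝓝 0))
    -- (b) the material semiderivatives of `g` and `q` exist near `x` and are
    -- partially differentiable at `x`
    (Dmg Dmq : (Fin n → ℝ) → ℝ)
    (hg : ∀ᶠ y in 𝓝 x,
      Tendsto (fun t => (g t (y + t • V y) - g 0 y) / t) (𝓝[>] (0 : ℝ)) (𝓝 (Dmg y)))
    (hq : ∀ᶠ y in 𝓝 x,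
      Tendsto (fun t => (q t (y + t • V y) - q 0 y) / t) (𝓝[>] (0 : ℝ)) (𝓝 (Dmq y)))
    (pDmg pDmq : Fin n → ℝ)
    (hpg : ∀ i : Fin n, HasLineDerivAt ℝ Dmg (pDmg i) x (Pi.single i 1))
    (hpq : ∀ i : Fin n, HasLineDerivAt ℝ Dmq (pDmq i) x (Pi.single i 1))
    -- (c) the material semiderivatives of the partial derivatives exist and are given by
    -- `∂ᵢ(D_{Hm}g)(x) − Σₗ ∂ₗg₀(x)·∂ᵢVₗ(x)` (and likewise for `q`)
    (hcg : ∀ i : Fin n,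
      Tendsto (fun t => (pderiv' n i (g t) (x + t • V x) - pderiv' n i (g 0) x) / t)
        (𝓝[>] (0 : ℝ))
        (𝓝 (pDmg i - ∑ l, pderiv' n l (g 0) x * pderiv' n i (fun y => V y l) x)))
    (hcq : ∀ i : Fin n,
      Tendsto (fun t => (pderiv' n i (q t) (x + t • V x) - pderiv' n i (q 0) x) / t)
        (𝓝[>] (0 : ℝ))
        (𝓝 (pDmq i - ∑ l, pderiv' n l (q 0) x * pderiv' n i (fun y => V y l) x))) :
    Tendsto
      (fun t =>
        (((∑ i, ∑ j, a i j (x + t • V x)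
              * pderiv' n i (g t) (x + t • V x) * pderiv' n j (q t) (x + t • V x))
          + (∑ i, d i (x + t • V x)
              * (pderiv' n i (g t) (x + t • V x) * q t (x + t • V x)
                + g t (x + t • V x) * pderiv' n i (q t) (x + t • V x)))
          + b (x + t • V x) * g t (x + t • V x) * q t (x + t • V x))
        - ((∑ i, ∑ j, a i j x * pderiv' n i (g 0) x * pderiv' n j (q 0) x)
          + (∑ i, d i x * (pderiv' n i (g 0) x * q 0 x + g 0 x * pderiv' n i (q 0) x))
          + b x * g 0 x * q 0 x)) / t)
      (𝓝[>] (0 : ℝ))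
      (𝓝 ((∑ i, ∑ j, a i j x
            * ((pDmg i - ∑ l, pderiv' n l (g 0) x * pderiv' n i (fun y => V y l) x)
                * pderiv' n j (q 0) x
              + pderiv' n i (g 0) x
                * (pDmq j - ∑ l, pderiv' n l (q 0) x * pderiv' n j (fun y => V y l) x)))
        + (∑ i, d i x
            * ((pDmg i - ∑ l, pderiv' n l (g 0) x * pderiv' n i (fun y => V y l) x) * q 0 x
              + pderiv' n i (g 0) x * Dmq x
              + Dmg x * pderiv' n i (q 0) x
              + g 0 x * (pDmq i - ∑ l, pderiv' n l (q 0) x * pderiv' n i (fun y => V y l) x)))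
        + b x * (Dmg x * q 0 x + g 0 x * Dmq x))) :=
  hadamard_material_semideriv_bilinear_integrand_general n V x a d b g q haa had hab Dmg Dmq hg hq
    pDmg pDmq hcg hcq
end
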